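/- Let G be a finite simple graph in which every vertex has positive degree, and let i and j be adjacent marked vertices with equal degree d = deg(i) = deg(j), with marked set M = {i,j}. Let e_{ij} be the dart from i to j and e_{ji} the dart from j to i. Then the state φ defined by φ(e) = a for every dart e ∉ {e_{ij}, e_{ji}} and φ(e_{ij}) = φ(e_{ji}) = −(d−1)a is fixed by one step of the search algorithm: (S∘C∘Q)φ = φ. -/

import Mathlib

namespace GraphWalk

variable {V : Type*}

/-- The flip-flop shift operator `S` on the darts of a simple graph:
`(Sψ)(e) = ψ(e.symm)`. -/
noncomputable def shift (G : SimpleGraph V) (ψ : G.Dart → ℂ) : G.Dart → ℂ :=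
  fun e => ψ e.symm

/-- The Grover coin `C`:
`(Cψ)(e) = (2/deg(e.fst)) Σ_{e' : e'.fst = e.fst} ψ(e') − ψ(e)`. -/
noncomputable def coin [Fintype V] [DecidableEq V] (G : SimpleGraph V)
    [DecidableRel G.Adj] (ψ : G.Dart → ℂ) : G.Dart → ℂ :=
  fun e => (2 / (G.degree e.fst : ℂ)) *
      (∑ e' ∈ Finset.univ.filter (fun e' : G.Dart => e'.fst = e.fst), ψ e') - ψ e

/-- The query `Q`, flipping the sign of all amplitudes at marked vertices. -/
noncomputable def query [DecidableEq V] (G : SimpleGraph V) (M : Finset V)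
    (ψ : G.Dart → ℂ) : G.Dart → ℂ :=
  fun e => if e.fst ∈ M then -ψ e else ψ e

/-- One step of the search algorithm, `U' = S ∘ C ∘ Q`. -/
noncomputable def step [Fintype V] [DecidableEq V] (G : SimpleGraph V)
    [DecidableRel G.Adj] (M : Finset V) (ψ : G.Dart → ℂ) : G.Dart → ℂ :=
  shift G (coin G (query G M ψ))

/-- One step of the quantum walk without query, `U = S ∘ C`. -/
noncomputable def walk [Fintype V] [DecidableEq V] (G : SimpleGraph V)
    [DecidableRel G.Adj] (ψ : G.Dart → ℂ) : G.Dart → ℂ :=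
  shift G (coin G ψ)

end GraphWalk

/-!
Around a marked vertex of degree `d` the amplitudes of `φ` sum to `(d - 1)a - (d - 1)a = 0`, so
the Grover coin acts there as `-1` and undoes the sign flip of the query. Around an unmarked
vertex `φ` is constant, and a constant is fixed by the Grover coin (a reflection about the
uniform vector). Finally `φ` takes the same value on a dart and its reversal, so the shift fixes it.
-/

namespace GraphWalk

open Finset

variable {V : Type*} [DecidableEq V] {G : SimpleGraph V}

def pairState (i j : V) (c a : ℂ) (e : G.Dart) : ℂ :=
  if e.toProd = (i, j) ∨ e.toProd = (j, i) then c else a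

lemma pairState_comm (i j : V) (c a : ℂ) : pairState (G := G) i j c a = pairState j i c a := by
  funext e
  simp only [pairState, or_comm]

lemma pairState_symm (i j : V) (c a : ℂ) (e : G.Dart) :
    pairState i j c a e.symm = pairState i j c a e := by
  obtain ⟨⟨u, w⟩, _⟩ := e
  simp only [pairState, SimpleGraph.Dart.symm_toProd, Prod.swap_prod_mk, Prod.mk.injEq]
  exact if_congr (by tauto) rfl rfl

lemma pairState_of_fst_ne {i j : V} {c a : ℂ} {e : G.Dart} (hi : e.fst ≠ i) (hj : e.fst ≠ j) :
    pairState i j c a e = a := by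
  have : ¬(e.toProd = (i, j) ∨ e.toProd = (j, i)) := by
    rintro (h | h) <;> simp_all
  simp [pairState, this]

variable [Fintype V] [DecidableRel G.Adj]

lemma coin_apply_of_sum_eq_zero {ψ : G.Dart → ℂ} {e : G.Dart}
    (h : ∑ e' ∈ univ.filter (fun e' : G.Dart => e'.fst = e.fst), ψ e' = 0) :
    coin G ψ e = -ψ e := by
  simp [coin, h]

lemma coin_apply_of_const {ψ : G.Dart → ℂ} {e : G.Dart}
    (h : ∀ e' : G.Dart, e'.fst = e.fst → ψ e' = ψ e) : coin G ψ e = ψ e := by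
  have hdeg : (G.degree e.fst : ℂ) ≠ 0 :=
    Nat.cast_ne_zero.mpr ((G.degree_pos_iff_exists_adj _).mpr ⟨_, e.adj⟩).ne'
  rw [coin, sum_congr rfl fun e' he' => h e' (mem_filter.mp he').2, sum_const,
    G.dart_fst_fiber_card_eq_degree, nsmul_eq_mul]
  field_simp
  ring

theorem step_eq_self {M : Finset V} {φ : G.Dart → ℂ} (hsymm : ∀ e, φ e.symm = φ e)
    (hmarked : ∀ v ∈ M, ∑ e ∈ univ.filter (fun e : G.Dart => e.fst = v), φ e = 0)
    (hunmarked : ∀ e e' : G.Dart, e.fst ∉ M → e'.fst = e.fst → φ e' = φ e) :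
    step G M φ = φ := by
  have hcoin : coin G (query G M φ) = φ := by
    funext e
    by_cases he : e.fst ∈ M
    · have hsum : ∑ e' ∈ univ.filter (fun e' : G.Dart => e'.fst = e.fst), query G M φ e' = 0 := by
        rw [sum_congr rfl fun e' he' =>
          (by simp [query, (mem_filter.mp he').2, he] : query G M φ e' = -φ e'),
          sum_neg_distrib, hmarked _ he, neg_zero]
      simp [coin_apply_of_sum_eq_zero hsum, query, he]
    · rw [coin_apply_of_const fun e' he' => by simp [query, he', he, hunmarked e e' he he']]
      simp [query, he]
  funext e
  simp only [step, hcoin, shift, hsymm]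

lemma sum_fst_fiber_of_eq_const_off {φ : G.Dart → ℂ} (D : G.Dart) {a : ℂ}
    (h : ∀ e : G.Dart, e.fst = D.fst → e ≠ D → φ e = a) :
    ∑ e ∈ univ.filter (fun e : G.Dart => e.fst = D.fst), φ e
      = ((G.degree D.fst : ℂ) - 1) * a + φ D := by
  have hD : D ∈ univ.filter (fun e : G.Dart => e.fst = D.fst) := by simp
  have hpos : 1 ≤ G.degree D.fst := (G.degree_pos_iff_exists_adj _).mpr ⟨_, D.adj⟩
  rw [← add_sum_erase _ _ hD, sum_congr rfl fun e he =>
      h e (mem_filter.mp (mem_of_mem_erase he)).2 (ne_of_mem_erase he),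
    sum_const, card_erase_of_mem hD, G.dart_fst_fiber_card_eq_degree, nsmul_eq_mul,
    Nat.cast_sub hpos, Nat.cast_one, add_comm]

lemma sum_fst_fiber_pairState {i j : V} (hadj : G.Adj i j) (c a : ℂ) :
    ∑ e ∈ univ.filter (fun e : G.Dart => e.fst = i), pairState i j c a e
      = ((G.degree i : ℂ) - 1) * a + c := by
  let D : G.Dart := ⟨(i, j), hadj⟩
  have hoff : ∀ e : G.Dart, e.fst = D.fst → e ≠ D → pairState i j c a e = a := by
    rintro e hfst hne
    refine if_neg fun h => h.elim (fun h => hne (SimpleGraph.Dart.ext _ _ h)) fun h => ?_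
    exact hadj.ne (hfst.symm.trans (congrArg Prod.fst h))
  rw [sum_fst_fiber_of_eq_const_off D hoff]
  simp [D, pairState]

end GraphWalk

theorem two_adjacent_marked_stationary_general {V : Type*} [Fintype V] [DecidableEq V]
    (G : SimpleGraph V) [DecidableRel G.Adj]
    (i j : V) (hadj : G.Adj i j) (hd : G.degree i = G.degree j) (a : ℂ) :
    GraphWalk.step G {i, j}
      (fun e => if e.toProd = (i, j) ∨ e.toProd = (j, i)
        then -((G.degree i : ℂ) - 1) * a else a)
    = fun e => if e.toProd = (i, j) ∨ e.toProd = (j, i)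
        then -((G.degree i : ℂ) - 1) * a else a := by
  change GraphWalk.step G {i, j} (GraphWalk.pairState i j _ a) = GraphWalk.pairState i j _ a
  refine GraphWalk.step_eq_self (GraphWalk.pairState_symm i j _ a) ?marked ?unmarked
  case marked =>
    intro v hv
    rcases Finset.mem_insert.mp hv with rfl | hv
    · rw [GraphWalk.sum_fst_fiber_pairState hadj]
      ring
    · rw [Finset.mem_singleton.mp hv, GraphWalk.pairState_comm,
        GraphWalk.sum_fst_fiber_pairState hadj.symm, ← hd]
      ring
  case unmarked =>
    intro e e' he he'
    simp only [Finset.mem_insert, Finset.mem_singleton, not_or] at he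
    rw [GraphWalk.pairState_of_fst_ne (he' ▸ he.1) (he' ▸ he.2),
      GraphWalk.pairState_of_fst_ne he.1 he.2]

/-- Let `i` and `j` be adjacent marked vertices of equal degree `d` in a finite simple
graph in which every vertex has positive degree. The state equal to `a` on every dart
except the two darts between `i` and `j`, where it equals `-(d-1)a`, is fixed by one
step of the search algorithm `S ∘ C ∘ Q` with marked set `{i, j}`. -/
theorem two_adjacent_marked_stationary {V : Type*} [Fintype V] [DecidableEq V]
    (G : SimpleGraph V) [DecidableRel G.Adj] (hdeg : ∀ v : V, 0 < G.degree v)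
    (i j : V) (hadj : G.Adj i j) (hd : G.degree i = G.degree j) (a : ℂ) :
    GraphWalk.step G {i, j}
      (fun e => if e.toProd = (i, j) ∨ e.toProd = (j, i)
        then -((G.degree i : ℂ) - 1) * a else a)
    = fun e => if e.toProd = (i, j) ∨ e.toProd = (j, i)
        then -((G.degree i : ℂ) - 1) * a else a :=
  two_adjacent_marked_stationary_general G i j hadj hd a
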